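/- arXiv:0912.3514 — 6 statements merged into one kernel-verified Lean document; each statement's English description precedes it below -/
import Mathlib

section
/- Let Z = [[0,1,0,0],[1,1,0,0],[0,0,1,1],[0,0,1,0]] and Π = [[1,0,0,0],[0,0,1,0],[0,1,0,0],[0,0,0,1]], and let 𝟙 = (1,1,1,1). Let m ≥ 1 and let w_1, …, w_m, z_1, …, z_m be natural numbers summing to n−2 (with n ≥ 3). Then the matrix M = Z^{z_m}·Π·Z^{w_m}·Π · ⋯ · Z^{z_1}·Π·Z^{w_1}·Π satisfies M·𝟙 = (F_{n−1}, F_n, F_n, F_{n−1}), where F denotes the Fibonacci sequence. -/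
open Matrix

private def fv (k : ℕ) : Fin 4 → ℕ :=
  ![Nat.fib k, Nat.fib (k+1), Nat.fib (k+1), Nat.fib k]

private lemma Z_mulVec (Z : Matrix (Fin 4) (Fin 4) ℕ)
    (hZ : Z = !![0,1,0,0; 1,1,0,0; 0,0,1,1; 0,0,1,0]) (k : ℕ) :
    Z *ᵥ fv k = fv (k+1) := by
  subst hZ
  funext i
  fin_cases i <;>
    simp [fv, mulVec, dotProduct, Fin.sum_univ_succ, Nat.fib_add_two] <;> ring

private lemma Pi_mulVec (Pi : Matrix (Fin 4) (Fin 4) ℕ)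
    (hPi : Pi = !![1,0,0,0; 0,0,1,0; 0,1,0,0; 0,0,0,1]) (k : ℕ) :
    Pi *ᵥ fv k = fv k := by
  subst hPi
  funext i
  fin_cases i <;>
    simp [fv, mulVec, dotProduct, Fin.sum_univ_succ]

private lemma Zpow_mulVec (Z : Matrix (Fin 4) (Fin 4) ℕ)
    (hZ : Z = !![0,1,0,0; 1,1,0,0; 0,0,1,1; 0,0,1,0]) (t k : ℕ) :
    Z ^ t *ᵥ fv k = fv (k + t) := by
  induction t with
  | zero => simp
  | succ t ih =>
    rw [pow_succ', ← Matrix.mulVec_mulVec, ih, Z_mulVec Z hZ]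
    ring_nf

private lemma prod_mulVec (Z Pi : Matrix (Fin 4) (Fin 4) ℕ)
    (hZ : Z = !![0,1,0,0; 1,1,0,0; 0,0,1,1; 0,0,1,0])
    (hPi : Pi = !![1,0,0,0; 0,0,1,0; 0,1,0,0; 0,0,0,1])
    (w z : ℕ → ℕ) (m k : ℕ) :
    (((List.range m).map (fun i => Z ^ z i * Pi * Z ^ w i * Pi)).reverse).prod *ᵥ fv k
      = fv (k + ∑ i ∈ Finset.range m, (w i + z i)) := by
  induction m with
  | zero => simp [fv]
  | succ m ih =>
    rw [List.range_succ, List.map_append, List.reverse_append, List.prod_append]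
    simp only [List.map_cons, List.map_nil, List.reverse_cons, List.reverse_nil,
      List.nil_append, List.prod_cons, List.prod_nil, mul_one]
    rw [← Matrix.mulVec_mulVec, ih]
    rw [← Matrix.mulVec_mulVec, ← Matrix.mulVec_mulVec, ← Matrix.mulVec_mulVec,
      Pi_mulVec Pi hPi, Zpow_mulVec Z hZ, Pi_mulVec Pi hPi, Zpow_mulVec Z hZ,
      Finset.sum_range_succ]
    simp [Nat.add_assoc]

/-- `M = Z^{z_m}·Π·Z^{w_m}·Π ⋯ Z^{z_1}·Π·Z^{w_1}·Π`, where index `i` of the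
functions `w z : ℕ → ℕ` corresponds to `w_{i+1}, z_{i+1}`. -/
theorem strip_satisfying_matrix_mulVec_one
    (Z Pi : Matrix (Fin 4) (Fin 4) ℕ)
    (hZ : Z = !![0,1,0,0; 1,1,0,0; 0,0,1,1; 0,0,1,0])
    (hPi : Pi = !![1,0,0,0; 0,0,1,0; 0,1,0,0; 0,0,0,1])
    (m n : ℕ) (hm : 1 ≤ m) (hn : 3 ≤ n) (w z : ℕ → ℕ)
    (hsum : ∑ i ∈ Finset.range m, (w i + z i) = n - 2)
    (M : Matrix (Fin 4) (Fin 4) ℕ)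
    (hM : M = (((List.range m).map
        (fun i => Z ^ z i * Pi * Z ^ w i * Pi)).reverse).prod) :
    M *ᵥ (fun _ => 1) =
      ![Nat.fib (n-1), Nat.fib n, Nat.fib n, Nat.fib (n-1)] := by
  have h1 : (fun _ => 1 : Fin 4 → ℕ) = fv 1 := by
    funext i; fin_cases i <;> simp [fv]
  rw [hM, h1, prod_mulVec Z Pi hZ hPi, hsum]
  have h2 : 1 + (n - 2) = n - 1 := by omega
  have h3 : n - 1 + 1 = n := by omega
  rw [h2]
  unfold fv
  rw [h3]
end

section
/- Let Z = [[0,1,0,0],[1,1,0,0],[0,0,1,1],[0,0,1,0]] and Π = [[1,0,0,0],[0,0,1,0],[0,1,0,0],[0,0,0,1]], and let 𝟙 = (1,1,1,1). Let m ≥ 1 and let w_1, …, w_m, z_1, …, z_m be natural numbers summing to n−2 (with n ≥ 3), and set M = Z^{z_m}·Π·Z^{w_m}·Π · ⋯ · Z^{z_1}·Π·Z^{w_1}·Π. Then 𝟙ᵗ·M·𝟙 = 2·F_{n+1}, where F denotes the Fibonacci sequence. (This is the number of satisfying states of any strip of triangles on n vertices.) -/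
/-!
The row vector `(F_{t+1}, F_{t+2}, F_{t+2}, F_{t+1})` is multiplied on the right by `Z` into the
same vector with `t + 1` in place of `t`, and is fixed by `Π` because its middle coordinates agree.
Hence `𝟙ᵗ = (F_1, F_2, F_2, F_1)` is carried by `M` to the vector with index `n - 2`, whose
coordinates add up to `2 (F_{n-1} + F_n) = 2 F_{n+1}`.
-/

open Matrix

section ShiftedRows

variable {ι R : Type*} [Fintype ι] [DecidableEq ι] [Semiring R]

theorem vecMul_pow_of_shift {v : ℕ → ι → R} {A : Matrix ι ι R}
    (hA : ∀ t, v t ᵥ* A = v (t + 1)) (t k : ℕ) : v t ᵥ* A ^ k = v (t + k) := by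
  induction k with
  | zero => simp
  | succ k ih => rw [pow_succ, ← vecMul_vecMul, ih, hA, add_assoc]

theorem vecMul_prod_reverse_map_range_of_shift {v : ℕ → ι → R} (A : ℕ → Matrix ι ι R)
    (d : ℕ → ℕ) (hA : ∀ i t, v t ᵥ* A i = v (t + d i)) (m t : ℕ) :
    v t ᵥ* ((List.range m).map A).reverse.prod = v (t + ∑ i ∈ Finset.range m, d i) := by
  induction m generalizing t with
  | zero => simp
  | succ m ih =>
    rw [List.range_succ, List.map_append, List.reverse_append, List.map_singleton,
      List.reverse_singleton, List.singleton_append, List.prod_cons, ← vecMul_vecMul, hA, ih,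
      Finset.sum_range_succ, add_assoc, add_comm (d m)]

end ShiftedRows

def fibRow (t : ℕ) : Fin 4 → ℕ :=
  ![Nat.fib (t + 1), Nat.fib (t + 2), Nat.fib (t + 2), Nat.fib (t + 1)]

theorem fibRow_zero : fibRow 0 = fun _ => 1 := by
  funext i
  fin_cases i <;> rfl

theorem fibRow_vecMul_Z (t : ℕ) :
    fibRow t ᵥ* !![0,1,0,0; 1,1,0,0; 0,0,1,1; 0,0,1,0] = fibRow (t + 1) := by
  funext i
  fin_cases i <;> simp [fibRow, vecMul, dotProduct, Fin.sum_univ_four, Nat.fib_add_two]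
  ring

theorem fibRow_vecMul_Pi (t : ℕ) :
    fibRow t ᵥ* !![1,0,0,0; 0,0,1,0; 0,1,0,0; 0,0,0,1] = fibRow t := by
  funext i
  fin_cases i <;> simp [fibRow, vecMul, dotProduct, Fin.sum_univ_four]

theorem fibRow_dotProduct_one (t : ℕ) : fibRow t ⬝ᵥ (fun _ => 1) = 2 * Nat.fib (t + 3) := by
  simp only [fibRow, dotProduct, Fin.sum_univ_four, mul_one, cons_val, Nat.fib_add_two (n := t + 1)]
  ring

theorem strip_number_of_satisfying_states_general
    (Z Pi : Matrix (Fin 4) (Fin 4) ℕ)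
    (hZ : Z = !![0,1,0,0; 1,1,0,0; 0,0,1,1; 0,0,1,0])
    (hPi : Pi = !![1,0,0,0; 0,0,1,0; 0,1,0,0; 0,0,0,1])
    (m n : ℕ) (hn : 3 ≤ n) (w z : ℕ → ℕ)
    (hsum : ∑ i ∈ Finset.range m, (w i + z i) = n - 2)
    (M : Matrix (Fin 4) (Fin 4) ℕ)
    (hM : M = (((List.range m).map
        (fun i => Z ^ z i * Pi * Z ^ w i * Pi)).reverse).prod) :
    dotProduct (fun _ => 1) (M *ᵥ (fun _ => 1)) = 2 * Nat.fib (n + 1) := by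
  have hZ_row : ∀ t, fibRow t ᵥ* Z = fibRow (t + 1) := hZ ▸ fibRow_vecMul_Z
  have hPi_row : ∀ t, fibRow t ᵥ* Pi = fibRow t := hPi ▸ fibRow_vecMul_Pi
  have hBlock (i t : ℕ) :
      fibRow t ᵥ* (Z ^ z i * Pi * Z ^ w i * Pi) = fibRow (t + (w i + z i)) := by
    rw [← vecMul_vecMul, ← vecMul_vecMul, ← vecMul_vecMul, vecMul_pow_of_shift hZ_row, hPi_row,
      vecMul_pow_of_shift hZ_row, hPi_row, add_assoc, add_comm (z i)]
  have hRow : (fun _ => 1) ᵥ* M = fibRow (n - 2) := by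
    rw [hM, ← fibRow_zero, vecMul_prod_reverse_map_range_of_shift _ _ hBlock, hsum, zero_add]
  rw [dotProduct_mulVec, hRow, fibRow_dotProduct_one, show n - 2 + 3 = n + 1 by omega]

/-- `M = Z^{z_m}·Π·Z^{w_m}·Π ⋯ Z^{z_1}·Π·Z^{w_1}·Π`, where index `i` of the
functions `w z : ℕ → ℕ` corresponds to `w_{i+1}, z_{i+1}`. -/
theorem strip_number_of_satisfying_states
    (Z Pi : Matrix (Fin 4) (Fin 4) ℕ)
    (hZ : Z = !![0,1,0,0; 1,1,0,0; 0,0,1,1; 0,0,1,0])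
    (hPi : Pi = !![1,0,0,0; 0,0,1,0; 0,1,0,0; 0,0,0,1])
    (m n : ℕ) (hm : 1 ≤ m) (hn : 3 ≤ n) (w z : ℕ → ℕ)
    (hsum : ∑ i ∈ Finset.range m, (w i + z i) = n - 2)
    (M : Matrix (Fin 4) (Fin 4) ℕ)
    (hM : M = (((List.range m).map
        (fun i => Z ^ z i * Pi * Z ^ w i * Pi)).reverse).prod) :
    dotProduct (fun _ => 1) (M *ᵥ (fun _ => 1)) = 2 * Nat.fib (n + 1) :=
  strip_number_of_satisfying_states_general Z Pi hZ hPi m n hn w z hsum M hM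
end

section
/- For all natural numbers n_1, n_2, n_3 ≥ 2, the Fibonacci numbers satisfy F_{n_3}·F_{n_1+1}·F_{n_2+1} + F_{n_3+1}·(F_{n_1}·F_{n_2+1} + F_{n_1+1}·F_{n_2}) = F_{n_1+n_2+n_3+1} − F_{n_3−1}·F_{n_1−1}·F_{n_2−1}. -/
theorem fib_one_interior_identity (n₁ n₂ n₃ : ℕ)
    (h₁ : 2 ≤ n₁) (h₂ : 2 ≤ n₂) (h₃ : 2 ≤ n₃) :
    (Nat.fib n₃ * (Nat.fib (n₁+1) * Nat.fib (n₂+1)) +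
      Nat.fib (n₃+1) * (Nat.fib n₁ * Nat.fib (n₂+1) + Nat.fib (n₁+1) * Nat.fib n₂) : ℤ) =
      (Nat.fib (n₁+n₂+n₃+1) : ℤ) -
        (Nat.fib (n₃-1) : ℤ) * (Nat.fib (n₁-1) : ℤ) * (Nat.fib (n₂-1) : ℤ) := by
  obtain ⟨a, rfl⟩ : ∃ a, n₁ = a + 2 := ⟨n₁ - 2, by omega⟩
  obtain ⟨b, rfl⟩ : ∃ b, n₂ = b + 2 := ⟨n₂ - 2, by omega⟩
  obtain ⟨c, rfl⟩ : ∃ c, n₃ = c + 2 := ⟨n₃ - 2, by omega⟩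
  have key : a + 2 + (b + 2) + (c + 2) + 1 = (a + 2) + (b + c + 4) + 1 := by ring
  have h1 : Nat.fib ((a + 2) + (b + c + 4) + 1)
      = Nat.fib (a+2) * Nat.fib (b+c+4) + Nat.fib (a+3) * Nat.fib (b+c+5) :=
    Nat.fib_add _ _
  have h2 : Nat.fib (b+c+4) = Nat.fib (b+2) * Nat.fib (c+1) + Nat.fib (b+3) * Nat.fib (c+2) := by
    have := Nat.fib_add (b+2) (c+1)
    simpa [show b+2+(c+1)+1 = b+c+4 by ring] using this
  have h3 : Nat.fib (b+c+5) = Nat.fib (b+2) * Nat.fib (c+2) + Nat.fib (b+3) * Nat.fib (c+3) := by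
    have := Nat.fib_add (b+2) (c+2)
    simpa [show b+2+(c+2)+1 = b+c+5 by ring] using this
  have fa : Nat.fib (a+3) = Nat.fib (a+2) + Nat.fib (a+1) := by
    rw [show a+3 = (a+1)+2 by ring, Nat.fib_add_two]; ring
  have fb : Nat.fib (b+3) = Nat.fib (b+2) + Nat.fib (b+1) := by
    rw [show b+3 = (b+1)+2 by ring, Nat.fib_add_two]; ring
  have fc : Nat.fib (c+3) = Nat.fib (c+2) + Nat.fib (c+1) := by
    rw [show c+3 = (c+1)+2 by ring, Nat.fib_add_two]; ring
  have fa2 : Nat.fib (a+2) = Nat.fib a + Nat.fib (a+1) := Nat.fib_add_two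
  have fb2 : Nat.fib (b+2) = Nat.fib b + Nat.fib (b+1) := Nat.fib_add_two
  have fc2 : Nat.fib (c+2) = Nat.fib c + Nat.fib (c+1) := Nat.fib_add_two
  simp only [show a+2+1 = a+3 from rfl, show b+2+1 = b+3 from rfl, show c+2+1 = c+3 from rfl,
    show a+2-1 = a+1 from rfl, show b+2-1 = b+1 from rfl, show c+2-1 = c+1 from rfl,
    key, h1, h2, h3, fa, fb, fc, fa2, fb2, fc2]
  push_cast
  ring
end

section
/- Let φ = (1+√5)/2 be the golden ratio. For all natural numbers n_1, n_2, n_3 ≥ 2, 2·(F_{n_1+n_2+n_3+1} − F_{n_3−1}·F_{n_1−1}·F_{n_2−1}) ≥ φ^{n_1+n_2+n_3−1}, where F denotes the Fibonacci sequence (viewed as a real number). -/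
lemma fib_triple_bound (a b c : ℕ) :
    2 * (Nat.fib a * Nat.fib b * Nat.fib c) ≤ Nat.fib (a+b+c+4) := by
  have hc : 2 * Nat.fib c ≤ Nat.fib (c+4) := by
    have h1 : Nat.fib c ≤ Nat.fib (c+2) := Nat.fib_mono (by omega)
    have h2 : Nat.fib c ≤ Nat.fib (c+3) := Nat.fib_mono (by omega)
    have h3 : Nat.fib (c+4) = Nat.fib (c+3) + Nat.fib (c+2) := by
      rw [show c+4 = (c+2)+2 by ring, Nat.fib_add_two, show c+2+1 = c+3 by ring]
      omega
    omega
  calc 2 * (Nat.fib a * Nat.fib b * Nat.fib c)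
      = Nat.fib a * (Nat.fib b * (2 * Nat.fib c)) := by ring
    _ ≤ Nat.fib (a+1) * (Nat.fib (b+1) * Nat.fib (c+4)) :=
        Nat.mul_le_mul Nat.fib_le_fib_succ (Nat.mul_le_mul Nat.fib_le_fib_succ hc)
    _ ≤ Nat.fib (a+1) * Nat.fib (b+c+4) := by
        refine Nat.mul_le_mul_left _ ?_
        have hb := Nat.fib_add b (c+3)
        rw [show c+3+1 = c+4 by ring] at hb
        rw [show b+c+4 = b+(c+3)+1 by ring, hb]
        exact Nat.le_add_left _ _
    _ ≤ Nat.fib (a+b+c+4) := by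
        have ha := Nat.fib_add a (b+c+3)
        rw [show b+c+3+1 = b+c+4 by ring] at ha
        rw [show a+b+c+4 = a+(b+c+3)+1 by ring, ha]
        exact Nat.le_add_left _ _

lemma phi_pow_le_fib (k : ℕ) :
    ((1 + Real.sqrt 5)/2) ^ k ≤ (Nat.fib (k+2) : ℝ) := by
  have h5 : (0:ℝ) ≤ 5 := by norm_num
  have hsq5 : Real.sqrt 5 ^ 2 = 5 := Real.sq_sqrt h5
  have hle3 : Real.sqrt 5 ≤ 3 := by nlinarith [Real.sqrt_nonneg 5]
  induction k using Nat.twoStepInduction with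
  | zero => simp
  | one => simp only [pow_one]; norm_num [Nat.fib]; nlinarith
  | more k ih1 ih2 =>
    have hphisq : ((1 + Real.sqrt 5)/2) ^ 2 = (1 + Real.sqrt 5)/2 + 1 := by
      nlinarith
    have hfib : (Nat.fib (k+2+2) : ℝ) = Nat.fib (k+1+2) + Nat.fib (k+2) := by
      rw [Nat.fib_add_two]; push_cast; ring
    calc ((1 + Real.sqrt 5)/2) ^ (k+2)
        = ((1 + Real.sqrt 5)/2) ^ k * ((1 + Real.sqrt 5)/2) ^ 2 := by ring
      _ = ((1 + Real.sqrt 5)/2) ^ (k+1) + ((1 + Real.sqrt 5)/2) ^ k := by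
          rw [hphisq]; ring
      _ ≤ (Nat.fib (k+1+2) : ℝ) + (Nat.fib (k+2) : ℝ) := add_le_add ih2 ih1
      _ = (Nat.fib (k+2+2) : ℝ) := hfib.symm

theorem one_interior_lower_bound (n₁ n₂ n₃ : ℕ)
    (h₁ : 2 ≤ n₁) (h₂ : 2 ≤ n₂) (h₃ : 2 ≤ n₃) :
    let φ : ℝ := (1 + Real.sqrt 5) / 2
    2 * ((Nat.fib (n₁+n₂+n₃+1) : ℝ) -
        (Nat.fib (n₃-1) : ℝ) * (Nat.fib (n₁-1) : ℝ) * (Nat.fib (n₂-1) : ℝ)) ≥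
      φ ^ (n₁+n₂+n₃-1) := by
  intro φ
  obtain ⟨a, rfl⟩ : ∃ a, n₁ = a + 2 := ⟨n₁ - 2, by omega⟩
  obtain ⟨b, rfl⟩ : ∃ b, n₂ = b + 2 := ⟨n₂ - 2, by omega⟩
  obtain ⟨c, rfl⟩ : ∃ c, n₃ = c + 2 := ⟨n₃ - 2, by omega⟩
  have e1 : a+2+(b+2)+(c+2)+1 = a+b+c+7 := by ring
  have e2 : a+2-1 = a+1 := by omega
  have e3 : b+2-1 = b+1 := by omega
  have e4 : c+2-1 = c+1 := by omega
  have e5 : a+2+(b+2)+(c+2)-1 = a+b+c+5 := by omega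
  rw [e1, e2, e3, e4, e5]
  have key : 2 * (Nat.fib (a+1) * Nat.fib (b+1) * Nat.fib (c+1)) ≤
      Nat.fib (a+b+c+7) := by
    have := fib_triple_bound (a+1) (b+1) (c+1)
    rwa [show a+1+(b+1)+(c+1)+4 = a+b+c+7 by ring] at this
  have keyR : (2:ℝ) * ((Nat.fib (a+1) : ℝ) * (Nat.fib (b+1) : ℝ) * (Nat.fib (c+1) : ℝ)) ≤
      (Nat.fib (a+b+c+7) : ℝ) := by exact_mod_cast key
  have hphi := phi_pow_le_fib (a+b+c+5)
  rw [show a+b+c+5+2 = a+b+c+7 by ring] at hphi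
  have : φ ^ (a+b+c+5) ≤ (Nat.fib (a+b+c+7) : ℝ) := hphi
  linarith
end

section
/- Let Z be the 4×4 matrix [[0,1,0,0],[1,1,0,0],[0,0,1,1],[0,0,1,0]] and 𝟙 = (1,1,1,1). Let x, y be natural numbers, let ñ ≥ 2 and l ≥ 1 be natural numbers, and let v = (y·F_{ñ}, x·F_{ñ} + y·F_{ñ−1}, x·F_{ñ} + y·F_{ñ−1}, y·F_{ñ}) ∈ ℕ^4. Then 𝟙ᵗ · Z^l · v = 2·(x·F_{l+2}·F_{ñ} + y·(F_{l+1}·F_{ñ} + F_{l+2}·F_{ñ−1})), where F denotes the Fibonacci sequence. -/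
open Matrix

/-!
Multiplying by `Z` on the right sends a row vector `(a, b, b, a)` to `(b, a + b, a + b, b)`, so
starting from `𝟙ᵗ = (F₁, F₂, F₂, F₁)` one gets `𝟙ᵗ · Z^l = (F_{l+1}, F_{l+2}, F_{l+2}, F_{l+1})`;
the count is the dot product of this row with `v`.
-/

lemma vecMul_transferZ {R : Type*} [Semiring R] (a b : R) :
    ![a, b, b, a] ᵥ* !![0,1,0,0; 1,1,0,0; 0,0,1,1; 0,0,1,0] = ![b, a + b, a + b, b] := by
  ext i
  fin_cases i <;> simp [vecMul, dotProduct, Fin.sum_univ_four, add_comm]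

lemma one_vecMul_transferZ_pow (l : ℕ) :
    (fun _ => 1) ᵥ* (!![0,1,0,0; 1,1,0,0; 0,0,1,1; 0,0,1,0] : Matrix (Fin 4) (Fin 4) ℕ) ^ l =
      ![Nat.fib (l+1), Nat.fib (l+2), Nat.fib (l+2), Nat.fib (l+1)] := by
  induction l with
  | zero =>
    ext i
    fin_cases i <;> rfl
  | succ l ih =>
    rw [pow_succ, ← vecMul_vecMul, ih, vecMul_transferZ, ← Nat.fib_add_two]

theorem glued_vector_count_general
    (Z : Matrix (Fin 4) (Fin 4) ℕ)
    (hZ : Z = !![0,1,0,0; 1,1,0,0; 0,0,1,1; 0,0,1,0])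
    (x y : ℕ) (n' l : ℕ)
    (v : Fin 4 → ℕ)
    (hv : v = ![y * Nat.fib n', x * Nat.fib n' + y * Nat.fib (n'-1),
        x * Nat.fib n' + y * Nat.fib (n'-1), y * Nat.fib n']) :
    dotProduct (fun _ => 1) ((Z ^ l) *ᵥ v) =
      2 * (x * Nat.fib (l+2) * Nat.fib n' +
        y * (Nat.fib (l+1) * Nat.fib n' + Nat.fib (l+2) * Nat.fib (n'-1))) := by
  subst hZ hv
  rw [dotProduct_mulVec, one_vecMul_transferZ_pow]
  simp only [dotProduct, Fin.sum_univ_four, cons_val]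
  ring

theorem glued_vector_count
    (Z : Matrix (Fin 4) (Fin 4) ℕ)
    (hZ : Z = !![0,1,0,0; 1,1,0,0; 0,0,1,1; 0,0,1,0])
    (x y : ℕ) (n' l : ℕ) (hn' : 2 ≤ n') (hl : 1 ≤ l)
    (v : Fin 4 → ℕ)
    (hv : v = ![y * Nat.fib n', x * Nat.fib n' + y * Nat.fib (n'-1),
        x * Nat.fib n' + y * Nat.fib (n'-1), y * Nat.fib n']) :
    dotProduct (fun _ => 1) ((Z ^ l) *ᵥ v) =
      2 * (x * Nat.fib (l+2) * Nat.fib n' +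
        y * (Nat.fib (l+1) * Nat.fib n' + Nat.fib (l+2) * Nat.fib (n'-1))) :=
  glued_vector_count_general Z hZ x y n' l v hv
end

section
/- Let φ = (1+√5)/2 be the golden ratio. For all natural numbers x, y, all natural numbers ñ ≥ 3 and l ≥ 1, we have 2·(x·F_{l+2}·F_{ñ} + y·(F_{l+1}·F_{ñ} + F_{l+2}·F_{ñ−1})) ≥ 2·(x + y)·φ^{l+ñ−2}, where F denotes the Fibonacci sequence (viewed as a real number). -/
/-!
Each Fibonacci coefficient dominates a product `F_{a+2} F_{b+2}` with `a + b = l + n - 2`: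
the first is `F_{l+2} F_n`, and the second is at least `F_{l+3} F_{n-1}` since `F_{n-1} ≤ F_n`.
Such a product is at least `φ ^ a φ ^ b`, because `φ ^ k = F_{k+1} - ψ F_k ≤ F_{k+2}` by `-1 < ψ`.
-/

open Real

namespace Real

open scoped goldenRatio

theorem goldenRatio_pow_le_fib_add_two (k : ℕ) : φ ^ k ≤ Nat.fib (k + 2) := by
  rw [← fib_succ_sub_goldenConj_mul_fib, Nat.fib_add_two, Nat.cast_add]
  nlinarith [neg_one_lt_goldenConj, (Nat.cast_nonneg (Nat.fib k) : (0 : ℝ) ≤ _)]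

theorem goldenRatio_pow_add_le_fib_mul_fib (a b : ℕ) :
    φ ^ (a + b) ≤ Nat.fib (a + 2) * Nat.fib (b + 2) := by
  rw [pow_add]
  exact mul_le_mul (goldenRatio_pow_le_fib_add_two a) (goldenRatio_pow_le_fib_add_two b)
    (by positivity) (Nat.cast_nonneg _)

end Real

namespace Nat

theorem fib_add_three_mul_le (l n : ℕ) :
    fib (l + 3) * fib n ≤ fib (l + 1) * fib (n + 1) + fib (l + 2) * fib n := by
  rw [show l + 3 = l + 1 + 2 from rfl, fib_add_two, add_mul]
  exact Nat.add_le_add_right (Nat.mul_le_mul_left _ fib_le_fib_succ) _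

end Nat

theorem inductive_step_inequality_general (x y : ℕ) (n' l : ℕ) (hn' : 3 ≤ n') :
    let φ : ℝ := (1 + Real.sqrt 5) / 2
    2 * ((x : ℝ) * Nat.fib (l+2) * Nat.fib n' +
        (y : ℝ) * (Nat.fib (l+1) * Nat.fib n' + Nat.fib (l+2) * Nat.fib (n'-1))) ≥
      2 * ((x : ℝ) + (y : ℝ)) * φ ^ (l + n' - 2) := by
  intro φ
  obtain ⟨k, rfl⟩ : ∃ k, n' = k + 3 := ⟨n' - 3, by omega⟩
  rw [show l + (k + 3) - 2 = l + (k + 1) by omega, show k + 3 - 1 = k + 2 from rfl]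
  have hx : φ ^ (l + (k + 1)) ≤ Nat.fib (l + 2) * Nat.fib (k + 3) :=
    goldenRatio_pow_add_le_fib_mul_fib l (k + 1)
  have hy : φ ^ (l + (k + 1)) ≤
      Nat.fib (l + 1) * Nat.fib (k + 3) + Nat.fib (l + 2) * Nat.fib (k + 2) := by
    calc φ ^ (l + (k + 1)) = φ ^ ((l + 1) + k) := by ring_nf
      _ ≤ Nat.fib (l + 3) * Nat.fib (k + 2) := goldenRatio_pow_add_le_fib_mul_fib (l + 1) k
      _ ≤ _ := by exact_mod_cast Nat.fib_add_three_mul_le l (k + 2)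
  linarith [mul_le_mul_of_nonneg_left hx (Nat.cast_nonneg x),
    mul_le_mul_of_nonneg_left hy (Nat.cast_nonneg y)]

theorem inductive_step_inequality (x y : ℕ) (n' l : ℕ) (hn' : 3 ≤ n') (hl : 1 ≤ l) :
    let φ : ℝ := (1 + Real.sqrt 5) / 2
    2 * ((x : ℝ) * Nat.fib (l+2) * Nat.fib n' +
        (y : ℝ) * (Nat.fib (l+1) * Nat.fib n' + Nat.fib (l+2) * Nat.fib (n'-1))) ≥
      2 * ((x : ℝ) + (y : ℝ)) * φ ^ (l + n' - 2) :=
  inductive_step_inequality_general x y n' l hn'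
end
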